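/- arXiv:2010.15743 — 3 statements merged into one kernel-verified Lean document; each statement's English description precedes it below -/
import Mathlib

section
/- Let H = D_{2m} be a dihedral group with m even, m ≥ 4, with central involution z, and suppose r0, r2, ρ0, ρ2 are four distinct involutions generating H with r0 r2 = ρ0 ρ2 = z. If z ∈ ⟨r0, ρ0⟩ then H = ⟨r0, ρ0⟩ and the order of r0 ρ0 equals m. -/
/-!
Since `r0 * r2 = z = ρ0 * ρ2` with `r0`, `ρ0` involutions, `r2 = r0 * z` and `ρ2 = ρ0 * z`, so
`z ∈ ⟨r0, ρ0⟩` forces `⟨r0, ρ0⟩` to contain all four generators. A group generated by two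
involutions `a`, `b` is `⟨a⟩ ⟨a * b⟩`, because `a` inverts `a * b` by conjugation; hence
`2 * m = |D_{2m}| ≤ 2 * orderOf (r0 * ρ0)`. Conversely, for even `m` the exponent of `D_{2m}`
is `m`, so `orderOf (r0 * ρ0) ∣ m`.
-/

open Subgroup Pointwise

namespace Subgroup

variable {G : Type*} [Group G]

theorem closure_pair_eq_zpowers_sup_zpowers_mul (a b : G) :
    closure {a, b} = zpowers a ⊔ zpowers (a * b) := by
  refine le_antisymm ?_ ?_
  · rw [closure_le, Set.insert_subset_iff, Set.singleton_subset_iff]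
    refine ⟨mem_sup_left (mem_zpowers a), ?_⟩
    simpa using
      mul_mem (mem_sup_left (inv_mem (mem_zpowers a))) (mem_sup_right (mem_zpowers (a * b)))
  · have ha : a ∈ closure {a, b} := subset_closure (by simp)
    have hb : b ∈ closure {a, b} := subset_closure (by simp)
    exact sup_le (zpowers_le.mpr ha) (zpowers_le.mpr (mul_mem ha hb))

theorem mem_normalizer_zpowers_mul {a b : G} (ha : a⁻¹ = a) (hb : b⁻¹ = b) :
    a ∈ normalizer (zpowers (a * b)) := by
  have hconj : MulAut.conj a (a * b) = (a * b)⁻¹ := by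
    rw [MulAut.conj_apply, mul_inv_rev, hb, ← mul_assoc, mul_eq_one_iff_eq_inv.mpr ha.symm, one_mul]
  rw [mem_normalizer_iff_map_conj_eq, MonoidHom.map_zpowers]
  exact (congrArg zpowers hconj).trans zpowers_inv

theorem natCard_closure_pair_le {a b : G} (ha : a⁻¹ = a) (hb : b⁻¹ = b) :
    Nat.card (closure {a, b}) ≤ orderOf a * orderOf (a * b) := by
  have hmul : (closure {a, b} : Set G) = zpowers a * zpowers (a * b) := by
    rw [closure_pair_eq_zpowers_sup_zpowers_mul, coe_mul_of_left_le_normalizer_right]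
    exact zpowers_le.mpr (mem_normalizer_zpowers_mul ha hb)
  calc Nat.card (closure {a, b}) = Nat.card ((zpowers a : Set G) * (zpowers (a * b) : Set G)) := by
        rw [← hmul]; rfl
    _ ≤ Nat.card (zpowers a) * Nat.card (zpowers (a * b)) := Set.natCard_mul_le
    _ = orderOf a * orderOf (a * b) := by rw [Nat.card_zpowers, Nat.card_zpowers]

end Subgroup

theorem DihedralGroup.orderOf_dvd_of_even {n : ℕ} (hn : Even n) (x : DihedralGroup n) :
    orderOf x ∣ n := by
  have h := Monoid.order_dvd_exponent x
  rwa [DihedralGroup.exponent, (lcm_eq_left_iff n 2 (normalize_eq n)).mpr hn.two_dvd] at h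

theorem stmt11_general (m : ℕ) (hm : Even m) (hm4 : 4 ≤ m)
    (z r0 r2 ρ0 ρ2 : DihedralGroup m)
    (h0 : orderOf r0 = 2) (hp0 : orderOf ρ0 = 2)
    (hgen : Subgroup.closure ({r0, r2, ρ0, ρ2} : Set (DihedralGroup m)) = ⊤)
    (hr : r0 * r2 = z) (hρ : ρ0 * ρ2 = z)
    (hz : z ∈ Subgroup.closure ({r0, ρ0} : Set (DihedralGroup m))) :
    Subgroup.closure ({r0, ρ0} : Set (DihedralGroup m)) = ⊤ ∧
      orderOf (r0 * ρ0) = m := by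
  have hr0 : r0⁻¹ = r0 := inv_eq_self_of_orderOf_eq_two h0
  have hρ0 : ρ0⁻¹ = ρ0 := inv_eq_self_of_orderOf_eq_two hp0
  have hr0_mem : r0 ∈ closure {r0, ρ0} := subset_closure (by simp)
  have hρ0_mem : ρ0 ∈ closure {r0, ρ0} := subset_closure (by simp)
  have htop : closure {r0, ρ0} = ⊤ := by
    rw [eq_top_iff, ← hgen, closure_le]
    rintro x (rfl | rfl | rfl | rfl)
    · exact hr0_mem
    · rw [eq_inv_mul_of_mul_eq hr, hr0]
      exact mul_mem hr0_mem hz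
    · exact hρ0_mem
    · rw [eq_inv_mul_of_mul_eq hρ, hρ0]
      exact mul_mem hρ0_mem hz
  have hcard : 2 * m ≤ 2 * orderOf (r0 * ρ0) :=
    calc 2 * m = Nat.card (closure {r0, ρ0}) := by
          rw [htop, card_top, DihedralGroup.nat_card]
      _ ≤ orderOf r0 * orderOf (r0 * ρ0) := natCard_closure_pair_le hr0 hρ0
      _ = 2 * orderOf (r0 * ρ0) := by rw [h0]
  have hdvd := DihedralGroup.orderOf_dvd_of_even hm (r0 * ρ0)
  exact ⟨htop, le_antisymm (Nat.le_of_dvd (by omega) hdvd) (by omega)⟩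

/-- In D_{2m} (m even, m ≥ 4) with central involution z, if r0, r2, ρ0, ρ2 are
distinct generating involutions with r0 r2 = ρ0 ρ2 = z, and z ∈ ⟨r0, ρ0⟩, then
⟨r0, ρ0⟩ = D_{2m} and orderOf (r0 ρ0) = m. -/
theorem stmt11 (m : ℕ) (hm : Even m) (hm4 : 4 ≤ m)
    (z r0 r2 ρ0 ρ2 : DihedralGroup m)
    (hzc : z ∈ Subgroup.center (DihedralGroup m)) (hz2 : orderOf z = 2)
    (h0 : orderOf r0 = 2) (h2 : orderOf r2 = 2)
    (hp0 : orderOf ρ0 = 2) (hp2 : orderOf ρ2 = 2)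
    (hd : [r0, r2, ρ0, ρ2].Pairwise (· ≠ ·))
    (hgen : Subgroup.closure ({r0, r2, ρ0, ρ2} : Set (DihedralGroup m)) = ⊤)
    (hr : r0 * r2 = z) (hρ : ρ0 * ρ2 = z)
    (hz : z ∈ Subgroup.closure ({r0, ρ0} : Set (DihedralGroup m))) :
    Subgroup.closure ({r0, ρ0} : Set (DihedralGroup m)) = ⊤ ∧
      orderOf (r0 * ρ0) = m :=
  stmt11_general m hm hm4 z r0 r2 ρ0 ρ2 h0 hp0 hgen hr hρ hz
end

section
/- Let H = D_{2m} with m even and z its central involution. If r0, ρ0 are involutions with z ∉ ⟨r0, ρ0⟩ and H = ⟨r0, ρ0, z⟩, then H ≅ ⟨r0, ρ0⟩ × ⟨z⟩, and the order of r0 ρ0 (which equals m/2) is odd. -/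
/-!
As `z` is central of order two and `z ∉ D`, the subgroups `D` and `⟨z⟩` meet trivially and
generate, so `D₂ₘ ≅ D × ⟨z⟩` and `|D| = m`. Rotations of order two are central, hence equal
to `z` by uniqueness; so `r0 = sr i` and `ρ0 = sr j` are reflections, `D` is the dihedral group
of order `2 · addOrderOf (j - i)`, and `r0 ρ0 = r (j - i)` has order `m / 2`. Were `m / 2`
even, `(r0 ρ0) ^ (m / 4)` would be a rotation of order two inside `D`, that is `z`.
-/

namespace Subgroup

variable {G : Type*} [Group G]

theorem disjoint_zpowers_of_notMem {H : Subgroup G} {z : G} (hp : (orderOf z).Prime)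
    (hz : z ∉ H) : Disjoint H (zpowers z) := by
  rw [disjoint_def]
  intro x hxH hxz
  by_contra hx1
  have hord : orderOf x = orderOf z :=
    (hp.eq_one_or_self_of_dvd _ (orderOf_dvd_of_mem_zpowers hxz)).resolve_left
      (mt orderOf_eq_one_iff.mp hx1)
  have : Finite (zpowers z) :=
    Nat.finite_of_card_ne_zero (by rw [Nat.card_zpowers]; exact hp.ne_zero)
  have heq : zpowers x = zpowers z :=
    eq_of_le_of_card_ge (zpowers_le.mpr hxz) (by rw [Nat.card_zpowers, Nat.card_zpowers, hord])
  exact hz (zpowers_le.mp (heq ▸ (zpowers_le.mpr hxH)))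

noncomputable def mulEquivProdOfDisjoint {H K : Subgroup G} (hK : K ≤ center G)
    (hHK : Disjoint H K) (hsup : H ⊔ K = ⊤) : G ≃* H × K :=
  have comm : ∀ (h : H) (k : K), Commute (H.subtype h) (K.subtype k) :=
    fun h k => mem_center_iff.mp (hK k.2) h
  (MulEquiv.ofBijective (H.subtype.noncommCoprod K.subtype comm)
    ⟨(MonoidHom.noncommCoprod_injective _ _ comm).mpr
      ⟨H.subtype_injective, K.subtype_injective, by simpa using hHK⟩,
     by rw [← MonoidHom.range_eq_top, MonoidHom.noncommCoprod_range, range_subtype,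
      range_subtype, hsup]⟩).symm

end Subgroup

open Subgroup

section zmodMultiples

variable {A : Type*} [AddGroup A]

noncomputable def zmodMultiplesHom (a : A) : ZMod (addOrderOf a) →+ A :=
  ZMod.lift _ ⟨zmultiplesHom A a, by simp [addOrderOf_nsmul_eq_zero]⟩

theorem zmodMultiplesHom_one (a : A) : zmodMultiplesHom a 1 = a := by
  rw [zmodMultiplesHom, ← Int.cast_one, ZMod.lift_coe, zmultiplesHom_apply, one_zsmul]

theorem zmodMultiplesHom_injective (a : A) :
    Function.Injective (zmodMultiplesHom a) :=
  (ZMod.lift_injective _).mpr fun k hk => by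
    simpa [ZMod.intCast_zmod_eq_zero_iff_dvd, ← addOrderOf_dvd_iff_zsmul_eq_zero] using hk

end zmodMultiples

namespace DihedralGroup

variable {n : ℕ}

theorem orderOf_r_eq_addOrderOf (x : ZMod n) : orderOf (r x) = addOrderOf x := by
  rw [← orderOf_ofAdd_eq_addOrderOf, orderOf_eq_orderOf_iff]
  intro k
  rw [r_pow, one_def, r.injEq, ← ofAdd_nsmul, ofAdd_eq_one, nsmul_eq_mul, mul_comm]

theorem r_mem_center_iff {x : ZMod n} : r x ∈ center (DihedralGroup n) ↔ x + x = 0 := by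
  rw [mem_center_iff]
  constructor
  · intro h
    have h' := h (sr 0)
    rw [sr_mul_r, r_mul_sr, sr.injEq] at h'
    linear_combination h'
  · rintro h (y | y)
    · rw [r_mul_r, r_mul_r, add_comm]
    · rw [sr_mul_r, r_mul_sr, sr.injEq]
      linear_combination h

theorem r_mem_center_of_orderOf_eq_two {x : ZMod n} (h : orderOf (r x) = 2) :
    r x ∈ center (DihedralGroup n) := by
  have hx := pow_orderOf_eq_one (r x)
  rw [h, r_pow, one_def, r.injEq] at hx
  exact r_mem_center_iff.mpr (by linear_combination hx)

theorem center_zero : center (DihedralGroup 0) = ⊥ := by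
  rw [eq_bot_iff]
  rintro (x | x) hx
  · have : x + x = 0 := r_mem_center_iff.mp hx
    rw [mem_bot, one_def, r.injEq]
    exact (by omega : ∀ y : ℤ, y + y = 0 → y = 0) x this
  · have h := mem_center_iff.mp hx (r 1)
    rw [r_mul_sr, sr_mul_r, sr.injEq] at h
    exact absurd h ((by omega : ∀ y : ℤ, y - 1 ≠ y + 1) x)

theorem closure_sr_zero_sr_one : closure {sr 0, sr 1} = (⊤ : Subgroup (DihedralGroup n)) := by
  have hr : ∀ t : ZMod n, r t ∈ closure {sr 0, sr 1} := by
    intro t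
    obtain ⟨k, rfl⟩ := ZMod.intCast_surjective t
    have h1 : r (1 : ZMod n) = sr 0 * sr 1 := by rw [sr_mul_sr, sub_zero]
    rw [← r_one_zpow, h1]
    exact zpow_mem (mul_mem (subset_closure (by simp)) (subset_closure (by simp))) k
  rw [eq_top_iff]
  rintro (t | t) -
  · exact hr t
  · rw [← zero_add t, ← sr_mul_r]
    exact mul_mem (subset_closure (by simp)) (hr t)

def homOfAddHom {k : ℕ} (α : ZMod k →+ ZMod n) (i : ZMod n) :
    DihedralGroup k →* DihedralGroup n where
  toFun
    | r t => r (α t)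
    | sr t => sr (i + α t)
  map_one' := by simp only [one_def, map_zero]
  map_mul' := by
    rintro (t | t) (u | u) <;>
      simp only [r_mul_r, r_mul_sr, sr_mul_r, sr_mul_sr, map_add, map_sub] <;> ring_nf

variable {k : ℕ} (α : ZMod k →+ ZMod n) (i : ZMod n)

@[simp]
theorem homOfAddHom_r (t : ZMod k) : homOfAddHom α i (r t) = r (α t) := rfl

@[simp]
theorem homOfAddHom_sr (t : ZMod k) : homOfAddHom α i (sr t) = sr (i + α t) := rfl

theorem homOfAddHom_injective (hα : Function.Injective α) :
    Function.Injective (homOfAddHom α i) := by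
  rw [injective_iff_map_eq_one]
  rintro (t | t) h
  · rw [homOfAddHom_r, one_def, r.injEq, ← map_zero α] at h
    rw [hα h, one_def]
  · rw [homOfAddHom_sr, one_def] at h
    cases h

theorem range_homOfAddHom : (homOfAddHom α i).range = closure {sr i, sr (i + α 1)} := by
  rw [MonoidHom.range_eq_map, ← closure_sr_zero_sr_one, MonoidHom.map_closure, Set.image_pair,
    homOfAddHom_sr, homOfAddHom_sr, map_zero, add_zero]

noncomputable def closureSrSrEquiv (i j : ZMod n) :
    DihedralGroup (addOrderOf (j - i)) ≃* closure {sr i, sr j} :=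
  (MonoidHom.ofInjective (homOfAddHom_injective _ i (zmodMultiplesHom_injective (j - i)))).trans
    (MulEquiv.subgroupCongr (by rw [range_homOfAddHom, zmodMultiplesHom_one, add_sub_cancel]))

theorem nat_card_closure_sr_sr (i j : ZMod n) :
    Nat.card (closure {sr i, sr j}) = 2 * addOrderOf (j - i) := by
  rw [← Nat.card_congr (closureSrSrEquiv i j).toEquiv, nat_card]

end DihedralGroup

open DihedralGroup

theorem stmt12_general (m : ℕ)
    (z r0 ρ0 : DihedralGroup m)
    (hzc : z ∈ Subgroup.center (DihedralGroup m)) (hz2 : orderOf z = 2)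
    (huniq : ∀ w : DihedralGroup m,
      w ∈ Subgroup.center (DihedralGroup m) → orderOf w = 2 → w = z)
    (h0 : orderOf r0 = 2) (hp0 : orderOf ρ0 = 2)
    (hznotin : z ∉ Subgroup.closure ({r0, ρ0} : Set (DihedralGroup m)))
    (hgen : Subgroup.closure ({r0, ρ0, z} : Set (DihedralGroup m)) = ⊤) :
    Nonempty (DihedralGroup m ≃*
        (↥(Subgroup.closure ({r0, ρ0} : Set (DihedralGroup m))) ×
          ↥(Subgroup.closure ({z} : Set (DihedralGroup m))))) ∧
      Nat.card ↥(Subgroup.closure ({r0, ρ0} : Set (DihedralGroup m))) = m ∧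
      Nonempty (↥(Subgroup.closure ({r0, ρ0} : Set (DihedralGroup m))) ≃*
        DihedralGroup (m / 2)) ∧
      orderOf (r0 * ρ0) = m / 2 ∧ Odd (m / 2) := by
  have hm0 : m ≠ 0 := by
    rintro rfl
    rw [center_zero, mem_bot] at hzc
    simp [hzc] at hz2
  have hrot : ∀ x, orderOf (r x) = 2 → r x = z :=
    fun x hx => huniq _ (r_mem_center_of_orderOf_eq_two hx) hx
  obtain ⟨i, rfl⟩ : ∃ i, r0 = sr i := by
    cases r0 with
    | r x => exact absurd (hrot x h0 ▸ subset_closure (by simp)) hznotin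
    | sr i => exact ⟨i, rfl⟩
  obtain ⟨j, rfl⟩ : ∃ j, ρ0 = sr j := by
    cases ρ0 with
    | r x => exact absurd (hrot x hp0 ▸ subset_closure (by simp)) hznotin
    | sr j => exact ⟨j, rfl⟩
  have hdisj : Disjoint (closure {sr i, sr j}) (closure {z}) := by
    rw [← zpowers_eq_closure]
    exact disjoint_zpowers_of_notMem (hz2 ▸ Nat.prime_two) hznotin
  have hsup : closure {sr i, sr j} ⊔ closure {z} = ⊤ := by
    rw [← Subgroup.closure_union, ← hgen, Set.insert_union, Set.singleton_union]
  have hcenter : closure {z} ≤ center (DihedralGroup m) :=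
    (closure_le _).mpr (Set.singleton_subset_iff.mpr hzc)
  let e := mulEquivProdOfDisjoint hcenter hdisj hsup
  have hcard : 2 * addOrderOf (j - i) = m := by
    have hcard_prod := Nat.card_congr e.toEquiv
    rw [Nat.card_prod, nat_card, ← zpowers_eq_closure, Nat.card_zpowers, hz2,
      nat_card_closure_sr_sr] at hcard_prod
    omega
  have hord : orderOf (sr i * sr j) = m / 2 := by
    rw [sr_mul_sr, orderOf_r_eq_addOrderOf]
    omega
  refine ⟨⟨e⟩, by rw [nat_card_closure_sr_sr, hcard], ?_, hord, ?_⟩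
  · rw [← hord, sr_mul_sr, orderOf_r_eq_addOrderOf]
    exact ⟨(closureSrSrEquiv i j).symm⟩
  · by_contra heven
    rw [Nat.not_odd_iff_even] at heven
    have h2 := orderOf_pow_orderOf_div (x := sr i * sr j) (by omega) (hord ▸ heven.two_dvd)
    rw [sr_mul_sr, r_pow] at h2
    apply hznotin
    rw [← hrot _ h2, ← r_pow, ← sr_mul_sr]
    exact pow_mem (mul_mem (subset_closure (by simp)) (subset_closure (by simp))) _

/-- In D_{2m} (m even) with unique central involution z, if r0, ρ0 are
involutions with z ∉ D := ⟨r0, ρ0⟩ and ⟨r0, ρ0, z⟩ = D_{2m}, then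
D_{2m} ≅ D × ⟨z⟩, D is dihedral of order m, and orderOf (r0 ρ0) = m/2 is odd. -/
theorem stmt12 (m : ℕ) (hm : Even m)
    (z r0 ρ0 : DihedralGroup m)
    (hzc : z ∈ Subgroup.center (DihedralGroup m)) (hz2 : orderOf z = 2)
    (huniq : ∀ w : DihedralGroup m,
      w ∈ Subgroup.center (DihedralGroup m) → orderOf w = 2 → w = z)
    (h0 : orderOf r0 = 2) (hp0 : orderOf ρ0 = 2)
    (hznotin : z ∉ Subgroup.closure ({r0, ρ0} : Set (DihedralGroup m)))
    (hgen : Subgroup.closure ({r0, ρ0, z} : Set (DihedralGroup m)) = ⊤) :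
    Nonempty (DihedralGroup m ≃*
        (↥(Subgroup.closure ({r0, ρ0} : Set (DihedralGroup m))) ×
          ↥(Subgroup.closure ({z} : Set (DihedralGroup m))))) ∧
      Nat.card ↥(Subgroup.closure ({r0, ρ0} : Set (DihedralGroup m))) = m ∧
      Nonempty (↥(Subgroup.closure ({r0, ρ0} : Set (DihedralGroup m))) ≃*
        DihedralGroup (m / 2)) ∧
      orderOf (r0 * ρ0) = m / 2 ∧ Odd (m / 2) :=
  stmt12_general m z r0 ρ0 hzc hz2 huniq h0 hp0 hznotin hgen
end

section
/- With Δ as above and 0 < b < a, the subgroup N = ⟨(R0P2)^a, (R0P2)^b (R2P0)^c⟩ (c > 0) is normal in Δ if and only if a = 2b. -/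
/-- The colour-preserving automorphism group Δ of the alternate-edge-coloured
square grid, i.e. ℤ² ⋊ (C₂ × C₂) with the coordinatewise sign action, realized
concretely as the direct product of two infinite dihedral groups. -/
abbrev Delta : Type := DihedralGroup 0 × DihedralGroup 0

def R0 : Delta := (DihedralGroup.sr 0, 1)
def P2 : Delta := (DihedralGroup.sr 1, 1)
def R2 : Delta := (1, DihedralGroup.sr 0)
def P0 : Delta := (1, DihedralGroup.sr 1)

/-!
In `Δ = D∞ × D∞` the translations are the pairs `(r x, r y)`, and `N` is the lattice spanned
by `(a, 0)` and `(b, c)`. Conjugation only changes the signs of the two coordinates, so `N` is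
normal iff the lattice is stable under `(x, y) ↦ (x, -y)`. Writing
`(b, -c) = m (a, 0) + n (b, c)` forces `n = -1` and then `m a = 2 b`, which for `0 < b < a`
means `m = 1`, i.e. `a = 2 b`; conversely `(2b, 0) - (b, c) = (b, -c)`.
-/

open DihedralGroup

lemma DihedralGroup.conj_r_eq_or {n : ℕ} (g : DihedralGroup n) (i : ZMod n) :
    g * r i * g⁻¹ = r i ∨ g * r i * g⁻¹ = r (-i) := by
  rcases g with j | j
  · left; simp only [r_mul_r, inv_r]; ring_nf
  · right; simp only [sr_mul_r, inv_sr, sr_mul_sr]; ring_nf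

lemma R0_mul_P2 : R0 * P2 = ((r 1, 1) : Delta) := by
  simp [R0, P2, sr_mul_sr]

lemma R2_mul_P0 : R2 * P0 = ((1, r 1) : Delta) := by
  simp [R2, P0, sr_mul_sr]

section Translations

variable {n₁ n₂ : ℕ}

lemma conj_one_sr_translation (i : ZMod n₂) (x : ZMod n₁) (y : ZMod n₂) :
    ((1, sr i) : DihedralGroup n₁ × DihedralGroup n₂) * (r x, r y) * (1, sr i)⁻¹ =
      (r x, r (-y)) := by
  simp only [Prod.inv_mk, Prod.mk_mul_mk, inv_one, one_mul, mul_one, inv_sr, sr_mul_r, sr_mul_sr]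
  ring_nf

lemma mem_closure_translation_pair {x₁ x₂ : ZMod n₁} {y : ZMod n₂}
    {p : DihedralGroup n₁ × DihedralGroup n₂} :
    p ∈ Subgroup.closure {(r x₁, 1), (r x₂, r y)} ↔
      ∃ m n : ℤ, (r (m • x₁ + n • x₂), r (n • y)) = p := by
  constructor
  · intro hp
    induction hp using Subgroup.closure_induction with
    | mem p hp =>
      rcases hp with rfl | rfl
      · exact ⟨1, 0, by simp⟩
      · exact ⟨0, 1, by simp⟩
    | one => exact ⟨0, 0, by simp⟩
    | mul p q _ _ hp hq =>
      obtain ⟨m, n, rfl⟩ := hp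
      obtain ⟨m', n', rfl⟩ := hq
      exact ⟨m + m', n + n', by simp only [Prod.mk_mul_mk, r_mul_r, add_zsmul]; abel_nf⟩
    | inv p _ hp =>
      obtain ⟨m, n, rfl⟩ := hp
      exact ⟨-m, -n, by simp only [Prod.inv_mk, inv_r, neg_zsmul]; abel_nf⟩
  · rintro ⟨m, n, rfl⟩
    have hpow : (r (m • x₁ + n • x₂), r (n • y)) =
        ((r x₁, 1) : DihedralGroup n₁ × DihedralGroup n₂) ^ m * (r x₂, r y) ^ n := by
      simp only [Prod.pow_mk, one_zpow, r_zpow, Prod.mk_mul_mk, one_mul, r_mul_r, zsmul_eq_mul]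
      ring_nf
    rw [hpow]
    exact mul_mem (zpow_mem (Subgroup.subset_closure (by simp)) m)
      (zpow_mem (Subgroup.subset_closure (by simp)) n)

lemma closure_translation_pair_normal (b : ZMod n₁) (c : ZMod n₂) :
    (Subgroup.closure
      {((r (2 * b), 1) : DihedralGroup n₁ × DihedralGroup n₂), (r b, r c)}).Normal := by
  constructor
  rintro p hp ⟨g₁, g₂⟩
  obtain ⟨m, n, rfl⟩ := mem_closure_translation_pair.mp hp
  rw [mem_closure_translation_pair, Prod.inv_mk, Prod.mk_mul_mk, Prod.mk_mul_mk]
  rcases g₁.conj_r_eq_or (m • (2 * b) + n • b) with h₁ | h₁ <;>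
    rcases g₂.conj_r_eq_or (n • c) with h₂ | h₂ <;> rw [h₁, h₂]
  · exact ⟨m, n, rfl⟩
  · exact ⟨m + n, -n, by simp only [zsmul_eq_mul]; push_cast; ring_nf⟩
  · exact ⟨-(m + n), n, by simp only [zsmul_eq_mul]; push_cast; ring_nf⟩
  · exact ⟨-m, -n, by simp only [zsmul_eq_mul]; push_cast; ring_nf⟩

end Translations

lemma eq_two_mul_of_lattice_coords {a b c m n : ℤ} (hb : 0 < b) (hba : b < a) (hc : 0 < c)
    (hx : m * a + n * b = b) (hy : n * c = -c) : a = 2 * b := by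
  have hn : n = -1 := mul_right_cancel₀ hc.ne' (hy.trans (neg_one_mul c).symm)
  subst hn
  have hm : m = 1 := by
    have hpos : 0 < m := pos_of_mul_pos_left (by linarith : 0 < m * a) (by linarith)
    have hlt : m < 2 := by nlinarith
    omega
  subst hm
  linarith

/-- With T1 = R0P2 and T2 = R2P0 the two unit translations and 0 < b < a,
c > 0, the subgroup N = ⟨T1^a, T1^b T2^c⟩ is normal in Δ iff a = 2b. -/
theorem stmt16 (a b c : ℕ) (hb : 0 < b) (hba : b < a) (hc : 0 < c) :
    (Subgroup.closure
      ({(R0 * P2) ^ a, (R0 * P2) ^ b * (R2 * P0) ^ c} : Set Delta)).Normal ↔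
      a = 2 * b := by
  simp only [R0_mul_P2, R2_mul_P0, Prod.pow_mk, one_pow, r_one_pow, Prod.mk_mul_mk, mul_one,
    one_mul]
  constructor
  · intro hN
    have hreflect := hN.conj_mem (r b, r c) (Subgroup.subset_closure (by simp)) R2
    rw [R2, conj_one_sr_translation, mem_closure_translation_pair] at hreflect
    obtain ⟨m, n, hmn⟩ := hreflect
    simp only [Prod.mk.injEq, r.injEq, zsmul_eq_mul] at hmn
    have hx : m * (a : ℤ) + n * b = b := by exact_mod_cast hmn.1
    have hy : n * (c : ℤ) = -c := by exact_mod_cast hmn.2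
    exact_mod_cast eq_two_mul_of_lattice_coords (by exact_mod_cast hb) (by exact_mod_cast hba)
      (by exact_mod_cast hc) hx hy
  · rintro rfl
    rw [Nat.cast_mul, Nat.cast_ofNat]
    exact closure_translation_pair_normal _ _
end
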